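/- Product rule for the magnetic Laplacian: for all u, ψ : V → ℂ and all x ∈ V, Δ_θ(ψu)(x) = ψ(x)·Δ_θ u(x) − P_ψ[u](x) + u(x)·Δψ(x), where P_ψ[u](x) = (1/μ(x)) Σ_y b(x,y)(ψ(x)−ψ(y))(u(x)−e^{iθ(x,y)}u(y)). -/
import Mathlib


open scoped BigOperators

/-- The formal magnetic Laplacian on a weighted graph. -/
noncomputable def magLap {V : Type*} (μ : V → ℝ) (b : V → V → ℝ) (θ : V → V → ℝ)
    (u : V → ℂ) (x : V) : ℂ :=
  (μ x : ℂ)⁻¹ * ∑' y, (b x y : ℂ) * (u x - Complex.exp (Complex.I * (θ x y : ℝ)) * u y)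

/-- The term `P_ψ[u]`. -/
noncomputable def magP {V : Type*} (μ : V → ℝ) (b : V → V → ℝ) (θ : V → V → ℝ)
    (ψ u : V → ℂ) (x : V) : ℂ :=
  (μ x : ℂ)⁻¹ *
    ∑' y, (b x y : ℂ) * (ψ x - ψ y) * (u x - Complex.exp (Complex.I * (θ x y : ℝ)) * u y)

/-- The cut-off function `χ_n`. -/
noncomputable def cutoff {V : Type*} (dist : V → ℕ) (n : ℕ) (x : V) : ℝ :=
  min (max ((2 * (n : ℝ) - (dist x : ℝ)) / (n : ℝ)) 0) 1

/-- Squared norm in `ℓ²(V, μ)`. -/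
noncomputable def wnormSq {V : Type*} (μ : V → ℝ) (f : V → ℂ) : ℝ :=
  ∑' x, μ x * ‖f x‖ ^ 2

/-- Inner product in `ℓ²(V, μ)`. -/
noncomputable def wInner {V : Type*} (μ : V → ℝ) (f g : V → ℂ) : ℂ :=
  ∑' x, (μ x : ℂ) * f x * (starRingEnd ℂ) (g x)

/-- Product rule for the magnetic Laplacian:
`Δ_θ(ψu)(x) = ψ(x)·Δ_θu(x) − P_ψ[u](x) + u(x)·Δψ(x)` where `Δ` is the non-magnetic
Laplacian (`θ ≡ 0`). -/
theorem magLap_product_rule {V : Type*} [Countable V]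
    (μ : V → ℝ) (b : V → V → ℝ) (θ : V → V → ℝ)
    (hμ : ∀ x, 0 < μ x)
    (hbsymm : ∀ x y, b x y = b y x) (hbnn : ∀ x y, 0 ≤ b x y) (hbdiag : ∀ x, b x x = 0)
    (hloc : ∀ x, {y | 0 < b x y}.Finite)
    (hθ : ∀ x y, θ x y = -θ y x) (hθbd : ∀ x y, |θ x y| ≤ Real.pi)
    (u ψ : V → ℂ) (x : V) :
    magLap μ b θ (fun z => ψ z * u z) x =
      ψ x * magLap μ b θ u x - magP μ b θ ψ u x
        + u x * magLap μ b (fun _ _ => 0) ψ x := by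
  classical
  set B : V → ℂ := fun y => (b x y : ℂ) * (u x - Complex.exp (Complex.I * (θ x y : ℝ)) * u y)
    with hBdef
  set C : V → ℂ := fun y =>
    (b x y : ℂ) * (ψ x - ψ y) * (u x - Complex.exp (Complex.I * (θ x y : ℝ)) * u y) with hCdef
  set D : V → ℂ := fun y => (b x y : ℂ) * (ψ x - Complex.exp (Complex.I * ((0:ℝ) : ℂ)) * ψ y)
    with hDdef
  have hfin : (Function.support fun y => ((b x y : ℂ))).Finite := by
    apply (hloc x).subset
    intro y hy
    simp only [Function.mem_support, ne_eq, Complex.ofReal_eq_zero] at hy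
    exact lt_of_le_of_ne (hbnn x y) (Ne.symm hy)
  have hsupp : ∀ f : V → ℂ, Summable (fun y => (b x y : ℂ) * f y) := by
    intro f
    apply summable_of_finite_support
    apply hfin.subset
    intro y hy
    simp only [Function.mem_support, ne_eq] at hy ⊢
    intro h; exact hy (by rw [h, zero_mul])
  have hB : Summable B := hsupp _
  have hC : Summable C := by
    have := hsupp (fun y => (ψ x - ψ y) * (u x - Complex.exp (Complex.I * (θ x y : ℝ)) * u y))
    simpa [hCdef, mul_assoc] using this
  have hD : Summable D := hsupp _
  have hpt : ∀ y, (b x y : ℂ) *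
      (ψ x * u x - Complex.exp (Complex.I * (θ x y : ℝ)) * (ψ y * u y))
      = ψ x * B y - C y + u x * D y := by
    intro y
    have h0 : Complex.exp (Complex.I * ((0:ℝ) : ℂ)) = 1 := by simp
    simp only [hBdef, hCdef, hDdef, h0, one_mul]
    ring
  have key : (∑' y, (b x y : ℂ) *
      ((fun z => ψ z * u z) x - Complex.exp (Complex.I * (θ x y : ℝ)) * ((fun z => ψ z * u z) y)))
      = ψ x * (∑' y, B y) - (∑' y, C y) + u x * (∑' y, D y) := by
    simp only [hpt]
    rw [Summable.tsum_add ((hB.mul_left (ψ x)).sub hC) (hD.mul_left (u x)),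
      Summable.tsum_sub (hB.mul_left (ψ x)) hC, tsum_mul_left, tsum_mul_left]
  simp only [magLap, magP, ← hBdef, ← hCdef, ← hDdef]
  rw [key]
  ring
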